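/- An ortholattice satisfying the condition (a ≡₀ b = 1 implies a = b), where a ≡₀ b := (a'∪b)∩(a∪b'), is distributive, i.e., a ∩ (b∪c) = (a∩b) ∪ (a∩c) holds for all a, b, c, so the ortholattice is a Boolean algebra. -/

import Mathlib

/-- An ortholattice as an algebra ⟨α, ', ∪, ∩⟩ with join `j` and
orthocomplement `c` primitive, and meet defined by De Morgan. -/
structure OrthoLattice (α : Type*) where
  j : α → α → α
  c : α → α
  j_comm : ∀ a b, j a b = j b a
  j_assoc : ∀ a b d, j (j a b) d = j a (j b d)
  c_invol : ∀ a, c (c a) = a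
  j_top : ∀ a b, j a (j b (c b)) = j b (c b)
  absorb : ∀ a b, j a (c (j (c a) (c b))) = a

namespace OrthoLattice

variable {α : Type*}

/-- meet: a ∩ b = (a' ∪ b')' -/
def m (L : OrthoLattice α) (a b : α) : α := L.c (L.j (L.c a) (L.c b))

/-- the unit 1 = a ∪ a' -/
def one (L : OrthoLattice α) (a : α) : α := L.j a (L.c a)

/-- quantum equivalence a ≡ b = (a∩b) ∪ (a'∩b') -/
def equiv (L : OrthoLattice α) (a b : α) : α := L.j (L.m a b) (L.m (L.c a) (L.c b))

/-- classical equivalence a ≡₀ b = (a'∪b) ∩ (a∪b') -/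
def equiv0 (L : OrthoLattice α) (a b : α) : α := L.m (L.j (L.c a) b) (L.j a (L.c b))

/-- Sasaki hook a →₁ b = a' ∪ (a ∩ b) -/
def sasaki (L : OrthoLattice α) (a b : α) : α := L.j (L.c a) (L.m a b)

end OrthoLattice

/-!
`a ≡₀ b = 1` says precisely that `b` is a complement of `a'`, so the hypothesis is that
complements are unique. Unique complements force the orthomodular law (for `a ≤ b`, the element
`a ∪ (b ∩ a')` is a complement of `b'`), which makes the Foulis–Holland theory of the commutation
relation available. The commutator of `a` and `b` commutes with both of them, and a second use of
unique complements shows that it vanishes. So any two elements commute, and Foulis–Holland gives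
distributivity.
-/

namespace OrthoLattice

variable {α : Type*} (L : OrthoLattice α)

lemma m_comm (a b : α) : L.m a b = L.m b a := by
  simp only [m, L.j_comm (L.c a)]

lemma m_assoc (a b d : α) : L.m (L.m a b) d = L.m a (L.m b d) := by
  simp only [m, L.c_invol, L.j_assoc]

lemma c_m (a b : α) : L.c (L.m a b) = L.j (L.c a) (L.c b) := by
  simp only [m, L.c_invol]

lemma c_j (a b : α) : L.c (L.j a b) = L.m (L.c a) (L.c b) := by
  simp only [m, L.c_invol]

lemma j_m_self (a b : α) : L.j a (L.m a b) = a := L.absorb a b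

lemma m_j_self (a b : α) : L.m a (L.j a b) = a := by
  have h := L.absorb (L.c a) (L.c b)
  simp only [L.c_invol] at h
  simp only [m, h, L.c_invol]

lemma j_self (a : α) : L.j a a = a := by
  nth_rewrite 2 [← L.m_j_self a a]
  exact L.j_m_self a (L.j a a)

lemma m_self (a : α) : L.m a a = a := by
  simp only [m, L.j_self, L.c_invol]

lemma j_j_j_comm (a b d e : α) : L.j (L.j a b) (L.j d e) = L.j (L.j a d) (L.j b e) := by
  rw [L.j_assoc, ← L.j_assoc b, L.j_comm b d, L.j_assoc d, ← L.j_assoc a]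

def le (a b : α) : Prop := L.j a b = b

lemma le_trans {a b d : α} (hab : L.le a b) (hbd : L.le b d) : L.le a d := by
  unfold le at *
  rw [← hbd, ← L.j_assoc, hab]

lemma le_antisymm {a b : α} (hab : L.le a b) (hba : L.le b a) : a = b := by
  unfold le at *
  rw [← hab, L.j_comm, hba]

lemma le_j_left (a b : α) : L.le a (L.j a b) := by
  rw [le, ← L.j_assoc, L.j_self]

lemma le_j_right (a b : α) : L.le b (L.j a b) := by
  rw [L.j_comm]
  exact L.le_j_left b a

lemma j_le {a b d : α} (had : L.le a d) (hbd : L.le b d) : L.le (L.j a b) d := by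
  unfold le at *
  rw [L.j_assoc, hbd, had]

lemma m_eq_left {a b : α} (h : L.le a b) : L.m a b = a := by
  rw [le] at h
  rw [← h, L.m_j_self]

lemma m_le_left (a b : α) : L.le (L.m a b) a := by
  rw [le, L.j_comm, L.j_m_self]

lemma m_le_right (a b : α) : L.le (L.m a b) b := by
  rw [L.m_comm]
  exact L.m_le_left b a

lemma c_le_c {a b : α} (h : L.le a b) : L.le (L.c b) (L.c a) := by
  rw [le, ← c_m, L.m_comm, L.m_eq_left h]

lemma le_m {a b d : α} (hab : L.le a b) (had : L.le a d) : L.le a (L.m b d) := by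
  have h := L.c_le_c (L.j_le (L.c_le_c hab) (L.c_le_c had))
  rw [L.c_invol] at h
  exact h

lemma m_right_comm (a b d : α) : L.m (L.m a b) d = L.m (L.m a d) b := by
  rw [L.m_assoc, L.m_comm b, ← L.m_assoc]

/-- `L.one a` does not depend on `a`, and `L.c (L.one a)` is the bottom element. -/
lemma le_one (a b : α) : L.le a (L.one b) := L.j_top a b

lemma one_eq_one (a b : α) : L.one a = L.one b :=
  L.le_antisymm (L.le_one (L.one a) b) (L.le_one (L.one b) a)

lemma c_one_le (a b : α) : L.le (L.c (L.one b)) a := by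
  simpa only [L.c_invol] using L.c_le_c (L.le_one (L.c a) b)

lemma m_c_self (a b : α) : L.m a (L.c a) = L.c (L.one b) := by
  rw [← L.one_eq_one (L.c a) b]
  rfl

lemma j_c_one (a b : α) : L.j a (L.c (L.one b)) = a := by
  rw [← L.m_c_self a b, L.j_m_self]

lemma m_c_one (a b : α) : L.m a (L.c (L.one b)) = L.c (L.one b) := by
  rw [L.m_comm, L.m_eq_left (L.c_one_le a b)]

lemma eq_c_one_of_le_of_le_c {a b : α} (hab : L.le a b) (hac : L.le a (L.c b)) (d : α) :
    a = L.c (L.one d) :=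
  L.le_antisymm (L.m_c_self b d ▸ L.le_m hab hac) (L.c_one_le a d)

def UniqueComplements : Prop :=
  ∀ a b : α, L.m a b = L.c (L.one a) → L.j a b = L.one a → b = L.c a

theorem uniqueComplements_of_equiv0 (h : ∀ a b : α, L.equiv0 a b = L.one a → a = b) :
    L.UniqueComplements := by
  intro a b hm hj
  refine (h (L.c a) b ?_).symm
  rw [equiv0, L.c_invol, hj, ← L.c_m, hm, L.c_invol, L.m_self, L.one_eq_one a]

def Orthomodular : Prop := ∀ a b : α, L.le a b → b = L.j a (L.m b (L.c a))

/-- `a ∪ (b ∩ a')` is a complement of `b'`, so unique complements force it to be `b`. -/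
theorem orthomodular_of_uniqueComplements (huc : L.UniqueComplements) : L.Orthomodular := by
  intro a b hab
  have hle : L.le (L.j a (L.m b (L.c a))) b := L.j_le hab (L.m_le_left b (L.c a))
  refine (L.c_invol b ▸ huc (L.c b) _ ?_ ?_).symm
  · rw [L.m_comm]
    exact L.eq_c_one_of_le_of_le_c (L.le_trans (L.m_le_left _ _) hle) (L.m_le_right _ _) _
  · rw [← L.j_assoc, ← L.c_invol a, ← L.c_m, L.c_invol, L.j_comm]
    exact L.one_eq_one _ _

def Commutes (a b : α) : Prop := a = L.j (L.m a b) (L.m a (L.c b))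

lemma commutes_c_right {a b : α} (h : L.Commutes a b) : L.Commutes a (L.c b) := by
  rw [Commutes, L.c_invol, L.j_comm]
  exact h

lemma commutes_self (a : α) : L.Commutes a a := by
  rw [Commutes, L.m_self, L.j_m_self]

lemma commutes_of_le {a b : α} (h : L.le a b) : L.Commutes a b := by
  rw [Commutes, L.m_eq_left h, L.j_m_self]

lemma c_eq_of_commutes {a b : α} (h : L.Commutes a b) :
    L.c a = L.m (L.j (L.c a) (L.c b)) (L.j (L.c a) b) := by
  conv_lhs => rw [h]
  rw [L.c_j, L.c_m, L.c_m, L.c_invol]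

lemma eq_c_one_of_commutes {a b d : α} (h : L.Commutes a b) (hb : L.m a b = L.c (L.one d))
    (hcb : L.m a (L.c b) = L.c (L.one d)) : a = L.c (L.one d) := by
  rw [h, hb, hcb, L.j_self]

section Orthomodular

variable {L} (hom : L.Orthomodular)
include hom

lemma commutes_symm {a b : α} (h : L.Commutes a b) : L.Commutes b a := by
  set e := L.j (L.m b a) (L.m b (L.c a))
  have he : L.le e b := L.j_le (L.m_le_left b a) (L.m_le_left b (L.c a))
  have hz : L.le (L.m b (L.c e)) (L.c a) := by
    rw [L.c_eq_of_commutes h]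
    refine L.le_m (L.le_trans (L.m_le_right _ _) ?_)
      (L.le_trans (L.m_le_left _ _) (L.le_j_right _ _))
    rw [L.c_j, L.c_m, L.j_comm (L.c a)]
    exact L.m_le_left _ _
  have hze : L.le (L.m b (L.c e)) e :=
    L.le_trans (L.le_m (L.m_le_left _ _) hz) (L.le_j_right _ _)
  have := hom e b he
  rwa [L.eq_c_one_of_le_of_le_c hze (L.m_le_right _ _) b, L.j_c_one] at this

lemma commutes_c_left {a b : α} (h : L.Commutes a b) : L.Commutes (L.c a) b :=
  commutes_symm hom (L.commutes_c_right (commutes_symm hom h))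

lemma m_j_c_of_commutes {a b : α} (h : L.Commutes a b) : L.m a (L.j (L.c a) b) = L.m a b := by
  have hle : L.le (L.m a b) (L.m a (L.j (L.c a) b)) :=
    L.le_m (L.m_le_left a b) (L.le_trans (L.m_le_right a b) (L.le_j_right (L.c a) b))
  have hrest : L.m (L.m a (L.j (L.c a) b)) (L.c (L.m a b)) = L.c (L.one a) := by
    rw [L.c_m, L.m_assoc, L.m_comm _ (L.j _ (L.c b)), ← L.c_eq_of_commutes h, L.m_c_self]
  have := hom _ _ hle
  rwa [hrest, L.j_c_one] at this

/-- The Foulis–Holland theorem. -/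
theorem m_j_of_commutes {a b d : α} (hb : L.Commutes a b) (hd : L.Commutes a d) :
    L.m a (L.j b d) = L.j (L.m a b) (L.m a d) := by
  have hle : L.le (L.j (L.m a b) (L.m a d)) (L.m a (L.j b d)) :=
    L.j_le (L.le_m (L.m_le_left a b) (L.le_trans (L.m_le_right a b) (L.le_j_left b d)))
      (L.le_m (L.m_le_left a d) (L.le_trans (L.m_le_right a d) (L.le_j_right b d)))
  have hrest : L.m a (L.c (L.j (L.m a b) (L.m a d))) = L.m (L.m a (L.c d)) (L.c b) := by
    rw [L.c_j, L.c_m, L.c_m, ← L.m_assoc, m_j_c_of_commutes hom (L.commutes_c_right hb),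
      L.m_right_comm, m_j_c_of_commutes hom (L.commutes_c_right hd)]
  have hrest_bot : L.m (L.m a (L.j b d)) (L.c (L.j (L.m a b) (L.m a d))) = L.c (L.one a) := by
    rw [L.m_right_comm, hrest]
    refine L.eq_c_one_of_le_of_le_c (L.m_le_right _ _) ?_ a
    rw [L.c_j]
    exact L.le_m (L.le_trans (L.m_le_left _ _) (L.m_le_right _ _))
      (L.le_trans (L.m_le_left _ _) (L.le_trans (L.m_le_left _ _) (L.m_le_right _ _)))
  have := hom _ _ hle
  rwa [hrest_bot, L.j_c_one] at this

lemma commutes_j {a b d : α} (hb : L.Commutes a b) (hd : L.Commutes a d) :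
    L.Commutes a (L.j b d) := by
  refine commutes_symm hom ?_
  rw [Commutes, L.m_comm _ a, L.m_comm _ (L.c a), m_j_of_commutes hom hb hd,
    m_j_of_commutes hom (commutes_c_left hom hb) (commutes_c_left hom hd), L.j_j_j_comm]
  conv_lhs => rw [commutes_symm hom hb, commutes_symm hom hd]
  rw [L.m_comm b, L.m_comm b, L.m_comm d, L.m_comm d]

lemma commutes_m {a b d : α} (hb : L.Commutes a b) (hd : L.Commutes a d) :
    L.Commutes a (L.m b d) :=
  L.commutes_c_right (commutes_j hom (L.commutes_c_right hb) (L.commutes_c_right hd))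

lemma commutes_of_c_le {a b : α} (h : L.le (L.c a) b) : L.Commutes a b := by
  have := commutes_c_left hom (L.commutes_of_le h)
  rwa [L.c_invol] at this

end Orthomodular

/-- The complement of the commutator `(a ∩ b) ∪ (a ∩ b') ∪ (a' ∩ b) ∪ (a' ∩ b')`. -/
def commutator (a b : α) : α :=
  L.m (L.m (L.j a b) (L.j a (L.c b))) (L.m (L.j (L.c a) b) (L.j (L.c a) (L.c b)))

lemma commutator_c_left (a b : α) : L.commutator (L.c a) b = L.commutator a b := by
  rw [commutator, L.c_invol, L.m_comm]
  rfl

lemma commutator_c_right (a b : α) : L.commutator a (L.c b) = L.commutator a b := by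
  rw [commutator, L.c_invol, L.m_comm (L.j a (L.c b)), L.m_comm (L.j (L.c a) (L.c b))]
  rfl

lemma le_commutator {a b x : α} (h₁ : L.le x (L.j a b)) (h₂ : L.le x (L.j a (L.c b)))
    (h₃ : L.le x (L.j (L.c a) b)) (h₄ : L.le x (L.j (L.c a) (L.c b))) :
    L.le x (L.commutator a b) :=
  L.le_m (L.le_m h₁ h₂) (L.le_m h₃ h₄)

lemma m_m_commutator (a b : α) : L.m (L.m a b) (L.commutator a b) = L.c (L.one a) := by
  refine L.eq_c_one_of_le_of_le_c (L.m_le_left _ _) ?_ a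
  rw [L.c_m]
  exact L.le_trans (L.m_le_right _ _) (L.le_trans (L.m_le_right _ _) (L.m_le_right _ _))

lemma commutes_commutator_left (hom : L.Orthomodular) (a b : α) :
    L.Commutes a (L.commutator a b) :=
  commutes_m hom (commutes_m hom (L.commutes_of_le (L.le_j_left _ _))
      (L.commutes_of_le (L.le_j_left _ _)))
    (commutes_m hom (commutes_of_c_le hom (L.le_j_left _ _))
      (commutes_of_c_le hom (L.le_j_left _ _)))

lemma commutes_commutator_right (hom : L.Orthomodular) (a b : α) :
    L.Commutes b (L.commutator a b) :=
  commutes_m hom (commutes_m hom (L.commutes_of_le (L.le_j_right _ _))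
      (commutes_of_c_le hom (L.le_j_right _ _)))
    (commutes_m hom (L.commutes_of_le (L.le_j_right _ _))
      (commutes_of_c_le hom (L.le_j_right _ _)))

section UniqueComplements

variable {L} (huc : L.UniqueComplements)
include huc

/-- With `g` the commutator and `w := b ∩ g`, the element `v := (a' ∩ w') ∪ w` always
satisfies `a ∪ v = 1`; splitting `a ∩ v` along `g`, which commutes with `a` and `b`, gives
`a ∩ v = 0`. Hence `v = a'` and `w ≤ a'`. -/
lemma m_commutator_le_c (a b : α) : L.le (L.m b (L.commutator a b)) (L.c a) := by
  have hom := L.orthomodular_of_uniqueComplements huc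
  set g := L.commutator a b
  set w := L.m b g
  set p := L.m (L.c a) (L.c w) with hp
  have hga : L.Commutes g a := commutes_symm hom (L.commutes_commutator_left hom a b)
  have hgb : L.Commutes g b := commutes_symm hom (L.commutes_commutator_right hom a b)
  have hgw : L.Commutes g w := commutes_m hom hgb (L.commutes_self g)
  have hgp : L.Commutes g p :=
    commutes_m hom (L.commutes_c_right hga) (L.commutes_c_right hgw)
  have hcw : L.c w = L.j (L.c b) (L.c g) := L.c_m b g
  have hg_v : L.m g (L.j p w) = w := by
    have hg_p : L.m g p = L.c (L.one a) := by
      rw [hp, hcw, ← L.m_assoc, L.m_comm g, L.m_assoc,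
        m_j_of_commutes hom (L.commutes_c_right hgb) (L.commutes_c_right (L.commutes_self g)),
        L.m_c_self g a, L.j_c_one, L.m_comm g, ← L.m_assoc, L.one_eq_one a (L.c a),
        ← L.m_m_commutator (L.c a) (L.c b), L.commutator_c_left, L.commutator_c_right]
    rw [m_j_of_commutes hom hgp hgw, hg_p, L.j_comm, L.j_c_one, L.m_comm g, L.m_assoc, L.m_self]
  have hcg_v : L.m (L.c g) (L.j p w) = L.m (L.c a) (L.c g) := by
    have hcg_w : L.m (L.c g) w = L.c (L.one a) :=
      L.eq_c_one_of_le_of_le_c (L.le_trans (L.m_le_right _ _) (L.m_le_right _ _))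
        (L.m_le_left _ _) a
    rw [m_j_of_commutes hom (commutes_c_left hom hgp) (commutes_c_left hom hgw), hcg_w,
      L.j_c_one, ← L.m_assoc, L.m_comm (L.c g), L.m_assoc, hcw, L.j_comm, L.m_j_self]
  have ha_v : L.m a (L.j p w) = L.c (L.one a) := by
    refine L.eq_c_one_of_commutes
      (commutes_symm hom (commutes_m hom hga (commutes_j hom hgp hgw))) ?_ ?_
    · rw [L.m_assoc, L.m_comm _ g, hg_v, ← L.m_assoc, L.m_m_commutator]
    · rw [L.m_assoc, L.m_comm _ (L.c g), hcg_v, ← L.m_assoc, L.m_c_self a a, L.m_comm,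
        L.m_c_one]
  have hv : L.j p w = L.c a := by
    refine huc a _ ha_v ?_
    rw [L.j_comm p, ← L.j_assoc, hp, ← L.c_j]
    exact L.one_eq_one _ _
  rw [← hv]
  exact L.le_j_right p w

lemma m_commutator_eq_c_one (a b : α) : L.m b (L.commutator a b) = L.c (L.one a) := by
  have h := m_commutator_le_c huc (L.c a) b
  rw [L.commutator_c_left, L.c_invol] at h
  exact L.eq_c_one_of_le_of_le_c h (m_commutator_le_c huc a b) a

lemma commutator_eq_c_one (a b : α) : L.commutator a b = L.c (L.one a) := by
  have hom := L.orthomodular_of_uniqueComplements huc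
  refine L.eq_c_one_of_commutes (commutes_symm hom (L.commutes_commutator_right hom a b)) ?_ ?_
  · rw [L.m_comm, m_commutator_eq_c_one huc]
  · rw [L.m_comm, ← L.commutator_c_right, m_commutator_eq_c_one huc]

lemma commutes_of_uniqueComplements (a b : α) : L.Commutes a b := by
  have hom := L.orthomodular_of_uniqueComplements huc
  have hle : L.le (L.j (L.m a b) (L.m a (L.c b))) a :=
    L.j_le (L.m_le_left a b) (L.m_le_left a _)
  have hc :
      L.c (L.j (L.m a b) (L.m a (L.c b))) = L.m (L.j (L.c a) (L.c b)) (L.j (L.c a) b) := by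
    rw [L.c_j, L.c_m, L.c_m, L.c_invol]
  have hrest : L.m a (L.c (L.j (L.m a b) (L.m a (L.c b)))) = L.c (L.one a) := by
    refine L.le_antisymm ?_ (L.c_one_le _ a)
    rw [← commutator_eq_c_one huc a b]
    refine L.le_commutator (L.le_trans (L.m_le_left _ _) (L.le_j_left _ _))
      (L.le_trans (L.m_le_left _ _) (L.le_j_left _ _)) ?_ ?_ <;> rw [hc]
    · exact L.le_trans (L.m_le_right _ _) (L.m_le_right _ _)
    · exact L.le_trans (L.m_le_right _ _) (L.m_le_left _ _)
  have := hom _ _ hle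
  rwa [hrest, L.j_c_one] at this

theorem m_j_distrib_of_uniqueComplements (a b d : α) :
    L.m a (L.j b d) = L.j (L.m a b) (L.m a d) :=
  m_j_of_commutes (L.orthomodular_of_uniqueComplements huc)
    (commutes_of_uniqueComplements huc a b) (commutes_of_uniqueComplements huc a d)

end UniqueComplements

end OrthoLattice

/-- an ortholattice with (a ≡₀ b = 1 ⟹ a = b) is distributive,
i.e. a Boolean algebra. -/
theorem stmt4 {α : Type*} (L : OrthoLattice α)
    (h : ∀ a b : α, L.equiv0 a b = L.one a → a = b) :
    ∀ a b d : α, L.m a (L.j b d) = L.j (L.m a b) (L.m a d) :=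
  OrthoLattice.m_j_distrib_of_uniqueComplements (L.uniqueComplements_of_equiv0 h)
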